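/- For all integers k ≥ 1 and n ≥ k + 1, every resolving set of the k-path graph P(n,k) has cardinality at least k. -/

import Mathlib

/-- The `k`-path graph `P(n,k)`: vertices `v_1, …, v_n` (here `Fin n`, with `v_r`
corresponding to index `r - 1`), distinct vertices adjacent iff their indices
differ by at most `k`. -/
def kPathGraph (n k : ℕ) : SimpleGraph (Fin n) where
  Adj i j := i ≠ j ∧ |(i.val : ℤ) - j.val| ≤ k
  symm := by
    constructor
    intro i j h
    exact ⟨h.1.symm, by rw [abs_sub_comm]; exact h.2⟩
  loopless := by
    constructor
    intro i h
    exact h.1 rfl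

/-- `W` is a resolving set for `G`: every pair of distinct vertices is
distinguished by its distance to some element of `W`. -/
def IsResolvingSet {V : Type*} (G : SimpleGraph V) (W : Set V) : Prop :=
  ∀ u v : V, u ≠ v → ∃ w ∈ W, G.dist u w ≠ G.dist v w

lemma kPath_walk_le (n k : ℕ) {u v : Fin n} (p : (kPathGraph n k).Walk u v) :
    |(u.val : ℤ) - v.val| ≤ k * p.length := by
  induction p with
  | nil => simp
  | @cons u x v h p ih =>
    have h2 : |(u.val : ℤ) - x.val| ≤ k := h.2
    rw [SimpleGraph.Walk.length_cons]
    calc |(u.val : ℤ) - v.val| ≤ |(u.val : ℤ) - x.val| + |(x.val : ℤ) - v.val| :=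
          abs_sub_le _ _ _
      _ ≤ k + k * p.length := add_le_add h2 ih
      _ = (k : ℤ) * (p.length + 1) := by ring
      _ = (k : ℤ) * ((p.length + 1 : ℕ) : ℤ) := by push_cast; ring

lemma kPath_exists_walk (n k : ℕ) (hk : 1 ≤ k) :
    ∀ d : ℕ, ∀ u v : Fin n, u.val ≤ v.val → v.val - u.val = d →
    ∃ p : (kPathGraph n k).Walk u v, p.length = (d + k - 1) / k := by
  intro d
  induction d using Nat.strong_induction_on with
  | _ d ih =>
    intro u v hle hd
    rcases Nat.eq_zero_or_pos d with h0 | hpos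
    · have huv : u = v := Fin.ext (by omega)
      subst huv
      refine ⟨SimpleGraph.Walk.nil, ?_⟩
      simp only [SimpleGraph.Walk.length_nil]
      rw [h0, Nat.div_eq_of_lt (by omega)]
    · by_cases hdk : d ≤ k
      · have hneuv : u ≠ v := by
          intro hEq
          have := congrArg Fin.val hEq
          omega
        have hadj : (kPathGraph n k).Adj u v := by
          refine ⟨hneuv, ?_⟩
          rw [abs_le]
          constructor <;> omega
        refine ⟨SimpleGraph.Walk.cons hadj SimpleGraph.Walk.nil, ?_⟩
        simp only [SimpleGraph.Walk.length_cons, SimpleGraph.Walk.length_nil]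
        rw [show d + k - 1 = (d - 1) + k by omega, Nat.add_div_right _ (by omega),
          Nat.div_eq_of_lt (by omega)]
      · have hu' : u.val + k < n := by omega
        have hneuu' : u ≠ (⟨u.val + k, hu'⟩ : Fin n) := by
          intro hEq
          have := congrArg Fin.val hEq
          simp only [] at this
          omega
        have hadj : (kPathGraph n k).Adj u ⟨u.val + k, hu'⟩ := by
          refine ⟨hneuu', ?_⟩
          rw [abs_le]
          constructor <;> simp only [] <;> omega
        obtain ⟨p, hp⟩ := ih (d - k) (by omega) ⟨u.val + k, hu'⟩ v
          (show u.val + k ≤ v.val by omega) (show v.val - (u.val + k) = d - k by omega)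
        refine ⟨SimpleGraph.Walk.cons hadj p, ?_⟩
        rw [SimpleGraph.Walk.length_cons, hp]
        have h1 : d - k + k - 1 = d - 1 := by omega
        have h2 : d + k - 1 = (d - 1) + k := by omega
        rw [h1, h2, Nat.add_div_right _ (by omega)]

lemma kPath_dist_eq (n k : ℕ) (hk : 1 ≤ k) (u v : Fin n) (huv : u.val ≤ v.val) :
    (kPathGraph n k).dist u v = (v.val - u.val + k - 1) / k := by
  obtain ⟨p, hp⟩ := kPath_exists_walk n k hk (v.val - u.val) u v huv rfl
  have hub : (kPathGraph n k).dist u v ≤ (v.val - u.val + k - 1) / k :=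
    hp ▸ SimpleGraph.dist_le p
  have hreach : (kPathGraph n k).Reachable u v := ⟨p⟩
  obtain ⟨q, hq⟩ := hreach.exists_walk_length_eq_dist
  have hlb := kPath_walk_le n k q
  rw [hq] at hlb
  have hlb' : v.val - u.val ≤ k * (kPathGraph n k).dist u v := by
    have : |(u.val : ℤ) - v.val| = ((v.val - u.val : ℕ) : ℤ) := by
      rw [abs_sub_comm]; rw [abs_eq_self.mpr (by push_cast; omega)]; push_cast; omega
    rw [this] at hlb
    exact_mod_cast hlb
  have : (v.val - u.val + k - 1) / k ≤ (kPathGraph n k).dist u v := by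
    calc (v.val - u.val + k - 1) / k ≤ (k * (kPathGraph n k).dist u v + (k - 1)) / k :=
          Nat.div_le_div_right (by omega)
      _ = (kPathGraph n k).dist u v + (k - 1) / k := Nat.mul_add_div (by omega) _ _
      _ = (kPathGraph n k).dist u v := by rw [Nat.div_eq_of_lt (by omega)]; omega
  omega

lemma kPath_key (n k : ℕ) (hk : 1 ≤ k) (u v w : Fin n) (huv : u.val < v.val)
    (hvk : v.val ≤ k) (hwu : w ≠ u) (hwv : w ≠ v)
    (hd : (kPathGraph n k).dist u w ≠ (kPathGraph n k).dist v w) :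
    k + 1 ≤ w.val ∧ ∃ c m, u.val < c ∧ c ≤ v.val ∧ c + k * m = w.val := by
  have hw : k + 1 ≤ w.val := by
    by_contra hcon
    push_neg at hcon
    have h1 : (kPathGraph n k).dist u w = 1 := by
      rw [SimpleGraph.dist_eq_one_iff_adj]
      refine ⟨fun hEq => hwu hEq.symm, ?_⟩
      rw [abs_le]
      constructor <;> omega
    have h2 : (kPathGraph n k).dist v w = 1 := by
      rw [SimpleGraph.dist_eq_one_iff_adj]
      refine ⟨fun hEq => hwv hEq.symm, ?_⟩
      rw [abs_le]
      constructor <;> omega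
    exact hd (h1.trans h2.symm)
  refine ⟨hw, ?_⟩
  rw [kPath_dist_eq n k hk u w (by omega), kPath_dist_eq n k hk v w (by omega)] at hd
  set d1 := (w.val - u.val + k - 1) / k with hd1
  set d2 := (w.val - v.val + k - 1) / k with hd2
  have hmono : d2 ≤ d1 := Nat.div_le_div_right (by omega)
  have hlt : d2 < d1 := lt_of_le_of_ne hmono (Ne.symm hd)
  have he1 : k * d1 + (w.val - u.val + k - 1) % k = w.val - u.val + k - 1 := by
    rw [hd1]; exact Nat.div_add_mod _ _
  have he2 : k * d2 + (w.val - v.val + k - 1) % k = w.val - v.val + k - 1 := by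
    rw [hd2]; exact Nat.div_add_mod _ _
  have hr1 : (w.val - u.val + k - 1) % k < k := Nat.mod_lt _ (by omega)
  have hr2 : (w.val - v.val + k - 1) % k < k := Nat.mod_lt _ (by omega)
  have hmul : k * d2 + k ≤ k * d1 := by
    have h := Nat.mul_le_mul_left k (show d2 + 1 ≤ d1 by omega)
    rw [Nat.mul_add, Nat.mul_one] at h
    exact h
  have key1 : w.val - v.val ≤ k * d2 := by omega
  have key2 : k * d2 + 1 ≤ w.val - u.val := by omega
  refine ⟨w.val - k * d2, d2, by omega, by omega, by omega⟩

/-- For all integers `k ≥ 1` and `n ≥ k + 1`, every resolving set of the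
`k`-path graph `P(n,k)` has cardinality at least `k`. -/
theorem card_resolvingSet_kPathGraph (k n : ℕ) (hk : 1 ≤ k) (hn : k + 1 ≤ n)
    (W : Finset (Fin n)) (hW : IsResolvingSet (kPathGraph n k) ↑W) :
    k ≤ W.card := by
  classical
  have hn0 : 0 < n := by omega
  set v : ℕ → Fin n := fun j => ⟨j % n, Nat.mod_lt j hn0⟩ with hv
  have hvval : ∀ j, j ≤ k → (v j).val = j := fun j hj => Nat.mod_eq_of_lt (by omega)
  set P : ℕ → Prop := fun i => v i ∉ W with hP
  set gre : ℕ → ℕ := fun j => Nat.findGreatest P (j - 1) with hgre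
  set f : ℕ → Fin n := fun j =>
    if v j ∈ W then v j
    else if h : v (gre j) ≠ v j ∧ v (gre j) ∉ W then
      Classical.choose (hW (v (gre j)) (v j) h.1)
    else v 0
    with hf
  have hcases : ∀ j, 1 ≤ j → j ≤ k →
      (v j ∈ W ∧ f j = v j) ∨
      (v j ∉ W ∧ f j ∈ W ∧ k + 1 ≤ (f j).val ∧
        ∃ c m, gre j < c ∧ c ≤ j ∧ c + k * m = (f j).val) ∨
      (v j ∉ W ∧ (∀ i, i < j → v i ∈ W) ∧ f j = v 0 ∧ v 0 ∈ W) := by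
    intro j h1 h2
    by_cases hjW : v j ∈ W
    · exact Or.inl ⟨hjW, by simp [hf, hjW]⟩
    by_cases hex : ∃ i, i < j ∧ v i ∉ W
    · obtain ⟨i, hij, hiW⟩ := hex
      have hgspec : v (gre j) ∉ W :=
        Nat.findGreatest_spec (P := fun i => v i ∉ W) (n := j - 1) (m := i) (by omega) hiW
      have hgr_lt : gre j < j := lt_of_le_of_lt (Nat.findGreatest_le _) (by omega)
      have hgval : (v (gre j)).val = gre j := hvval _ (by omega)
      have hjval : (v j).val = j := hvval j h2
      have hne : v (gre j) ≠ v j := by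
        intro hEq
        have := congrArg Fin.val hEq
        omega
      have hcond : v (gre j) ≠ v j ∧ v (gre j) ∉ W := ⟨hne, hgspec⟩
      have hfj : f j = Classical.choose (hW (v (gre j)) (v j) hne) := by
        simp only [hf, if_neg hjW, dif_pos hcond]
      obtain ⟨hwmem, hwdist⟩ := Classical.choose_spec (hW (v (gre j)) (v j) hne)
      rw [← hfj] at hwmem hwdist
      have hkey := kPath_key n k hk (v (gre j)) (v j) (f j)
        (by omega) (by omega)
        (fun hEq => hgspec (hEq ▸ hwmem)) (fun hEq => hjW (hEq ▸ hwmem)) hwdist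
      obtain ⟨hwbig, c, m, hc1, hc2, hc3⟩ := hkey
      exact Or.inr (Or.inl ⟨hjW, hwmem, hwbig, c, m, by omega, by omega, hc3⟩)
    · push_neg at hex
      have hall : ∀ i, i < j → v i ∈ W := fun i hi => hex i hi
      have h0W : v 0 ∈ W := hall 0 (by omega)
      have hncond : ¬(v (gre j) ≠ v j ∧ v (gre j) ∉ W) := by
        rintro ⟨-, hnW⟩
        exact hnW (hall (gre j) (lt_of_le_of_lt (Nat.findGreatest_le _) (by omega)))
      exact Or.inr (Or.inr ⟨hjW, hall, by simp only [hf, if_neg hjW, dif_neg hncond], h0W⟩)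
  have hmaps : ∀ j ∈ Finset.Icc 1 k, f j ∈ W := by
    intro j hj
    rw [Finset.mem_Icc] at hj
    rcases hcases j hj.1 hj.2 with ⟨h1, h2⟩ | ⟨-, h2, -⟩ | ⟨-, -, h3, h4⟩
    · rw [h2]; exact h1
    · exact h2
    · rw [h3]; exact h4
  have hmain : ∀ j1 j2, 1 ≤ j1 → j1 ≤ k → 1 ≤ j2 → j2 ≤ k → j1 < j2 → f j1 = f j2 → False := by
    intro j1 j2 ha1 ha2 hb1 hb2 hlt heq
    have hv1 : (v j1).val = j1 := hvval j1 ha2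
    have hv2 : (v j2).val = j2 := hvval j2 hb2
    have hv0 : (v 0).val = 0 := hvval 0 (by omega)
    rcases hcases j1 ha1 ha2 with ⟨hm1, he1⟩ | ⟨hm1, hw1, hb1', c1, m1, hc11, hc12, hc13⟩ |
        ⟨hm1, hall1, he1, -⟩ <;>
      rcases hcases j2 hb1 hb2 with ⟨hm2, he2⟩ | ⟨hm2, hw2, hb2', c2, m2, hc21, hc22, hc23⟩ |
        ⟨hm2, hall2, he2, -⟩
    · rw [he1, he2] at heq; have := congrArg Fin.val heq; omega
    · rw [he1] at heq; have := congrArg Fin.val heq; omega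
    · rw [he1, he2] at heq; have := congrArg Fin.val heq; omega
    · rw [he2] at heq; have := congrArg Fin.val heq; omega
    · -- both case 2
      have hgge : j1 ≤ gre j2 :=
        Nat.le_findGreatest (P := fun i => v i ∉ W) (n := j2 - 1) (by omega) hm1
      have heqval : c1 + k * m1 = c2 + k * m2 := by
        rw [hc13, hc23, heq]
      have hc1c2 : c1 < c2 := by omega
      rcases le_or_gt m1 m2 with hm | hm
      · have : k * m1 ≤ k * m2 := Nat.mul_le_mul_left k hm
        omega
      · have hge : k * m2 + k ≤ k * m1 := by
          have h := Nat.mul_le_mul_left k (show m2 + 1 ≤ m1 by omega)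
          rw [Nat.mul_add, Nat.mul_one] at h
          exact h
        have hgre1 : gre j1 + 1 ≤ c1 := hc11
        omega
    · rw [he2] at heq; have := congrArg Fin.val heq; omega
    · rw [he1, he2] at heq; have := congrArg Fin.val heq; omega
    · rw [he1] at heq; have := congrArg Fin.val heq; omega
    · exact hm1 (hall2 j1 hlt)
  have hinj : Set.InjOn f ↑(Finset.Icc 1 k) := by
    intro j1 hj1 j2 hj2 heq
    simp only [Finset.coe_Icc, Set.mem_Icc] at hj1 hj2
    rcases Nat.lt_trichotomy j1 j2 with h | h | h
    · exact absurd heq (fun heq => hmain j1 j2 hj1.1 hj1.2 hj2.1 hj2.2 h heq)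
    · exact h
    · exact absurd heq.symm (fun heq => hmain j2 j1 hj2.1 hj2.2 hj1.1 hj1.2 h heq)
  have := Finset.card_le_card_of_injOn f hmaps hinj
  simpa [Nat.card_Icc] using this
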